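/- arXiv:2108.06856 — 2 statements merged into one kernel-verified Lean document; each statement's English description precedes it below -/
import Mathlib

section
/- Let M, N, K be positive integers and let A be a complex M×N matrix and B a complex N×K matrix with AB ≠ 0. Then the singularity function sing(A', B') = ‖A'‖·‖B'‖ / ‖A'B'‖ attains its minimum on the set S = {(A', B') : A' is M×N, B' is N×K, A'B' = AB}; that is, there exists (A₀, B₀) with A₀B₀ = AB such that ‖A₀‖·‖B₀‖ ≤ ‖A'‖·‖B'‖ for every pair (A', B') with A'B' = AB. -/
open Matrix

/-- The Frobenius norm of a complex matrix: the ℓ² norm of its entries. -/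
noncomputable def frob {m n : ℕ} (A : Matrix (Fin m) (Fin n) ℂ) : ℝ :=
  Real.sqrt (∑ i, ∑ j, ‖A i j‖ ^ 2)

/-!
Over the fibre `{(A', B') : A'B' = AB}` the product `‖A'‖‖B'‖` is not coercive, since
`(tA', t⁻¹B')` stays in the fibre for every `t ≠ 0`; the sum `‖A'‖² + ‖B'‖²` is, so it attains
its minimum on this closed set. A minimiser of the sum also minimises the product: by AM–GM
`2‖A₀‖‖B₀‖ ≤ ‖A₀‖² + ‖B₀‖²`, and any pair can be rescaled to `‖tA'‖ = ‖t⁻¹B'‖`, where the sum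
equals `2‖A'‖‖B'‖`.
-/

open Filter

section ScaledPairs

variable {E F : Type*} [NormedAddCommGroup E] [NormedAddCommGroup F]

lemma exists_norm_smul_sq_add_norm_inv_smul_sq_eq [NormedSpace ℝ E] [NormedSpace ℝ F]
    {x : E} {y : F} (hx : x ≠ 0) (hy : y ≠ 0) :
    ∃ t : ℝ, t ≠ 0 ∧ ‖t • x‖ ^ 2 + ‖t⁻¹ • y‖ ^ 2 = 2 * (‖x‖ * ‖y‖) := by
  have hx' : 0 < ‖x‖ := norm_pos_iff.2 hx
  have hy' : 0 < ‖y‖ := norm_pos_iff.2 hy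
  set t := √(‖y‖ / ‖x‖)
  have ht : 0 < t := Real.sqrt_pos.2 (by positivity)
  have ht2 : t ^ 2 = ‖y‖ / ‖x‖ := Real.sq_sqrt (by positivity)
  refine ⟨t, ht.ne', ?_⟩
  rw [norm_smul, norm_smul, norm_inv, Real.norm_of_nonneg ht.le, mul_pow, mul_pow, inv_pow, ht2]
  field_simp
  ring

lemma tendsto_norm_sq_add_norm_sq_cocompact_atTop [ProperSpace E] [ProperSpace F] :
    Tendsto (fun p : E × F => ‖p.1‖ ^ 2 + ‖p.2‖ ^ 2) (cocompact _) atTop := by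
  refine tendsto_atTop_mono (fun p => ?_)
    ((tendsto_pow_atTop two_ne_zero).comp tendsto_norm_cocompact_atTop)
  rcases le_total ‖p.1‖ ‖p.2‖ with h | h <;> simp [Prod.norm_def, h]

lemma IsClosed.exists_isMinOn_norm_sq_add_norm_sq [ProperSpace E] [ProperSpace F]
    {S : Set (E × F)} (hS : IsClosed S) (hne : S.Nonempty) :
    ∃ p ∈ S, IsMinOn (fun p : E × F => ‖p.1‖ ^ 2 + ‖p.2‖ ^ 2) S p := by
  obtain ⟨p₀, hp₀⟩ := hne
  refine (Continuous.continuousOn (by fun_prop)).exists_isMinOn' hS hp₀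
    (Eventually.filter_mono inf_le_left ?_)
  exact tendsto_norm_sq_add_norm_sq_cocompact_atTop.eventually_ge_atTop _

lemma IsClosed.exists_isMinOn_norm_mul_norm [NormedSpace ℝ E] [NormedSpace ℝ F]
    [ProperSpace E] [ProperSpace F] {S : Set (E × F)} (hS : IsClosed S) (hne : S.Nonempty)
    (hsmul : ∀ p ∈ S, ∀ t : ℝ, t ≠ 0 → (t • p.1, t⁻¹ • p.2) ∈ S)
    (hzero : ∀ p ∈ S, p.1 ≠ 0 ∧ p.2 ≠ 0) :
    ∃ p ∈ S, IsMinOn (fun p : E × F => ‖p.1‖ * ‖p.2‖) S p := by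
  obtain ⟨p₀, hp₀, hmin⟩ := hS.exists_isMinOn_norm_sq_add_norm_sq hne
  refine ⟨p₀, hp₀, fun q hq => ?_⟩
  obtain ⟨t, ht, hbal⟩ :=
    exists_norm_smul_sq_add_norm_inv_smul_sq_eq (hzero q hq).1 (hzero q hq).2
  have hle : 2 * (‖p₀.1‖ * ‖p₀.2‖) ≤ 2 * (‖q.1‖ * ‖q.2‖) :=
    calc 2 * (‖p₀.1‖ * ‖p₀.2‖) ≤ ‖p₀.1‖ ^ 2 + ‖p₀.2‖ ^ 2 := by
          linarith [two_mul_le_add_sq ‖p₀.1‖ ‖p₀.2‖]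
      _ ≤ ‖t • q.1‖ ^ 2 + ‖t⁻¹ • q.2‖ ^ 2 := hmin (hsmul q hq t ht)
      _ = 2 * (‖q.1‖ * ‖q.2‖) := hbal
  exact (mul_le_mul_iff_right₀ two_pos).1 hle

end ScaledPairs

attribute [local instance] Matrix.frobeniusNormedAddCommGroup Matrix.frobeniusNormedSpace

lemma frob_eq_norm {m n : ℕ} (A : Matrix (Fin m) (Fin n) ℂ) : frob A = ‖A‖ := by
  simp [frob, frobenius_norm_def, Real.sqrt_eq_rpow]

theorem stmt0_general (M N K : ℕ)
    (A : Matrix (Fin M) (Fin N) ℂ) (B : Matrix (Fin N) (Fin K) ℂ)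
    (hAB : A * B ≠ 0) :
    ∃ (A₀ : Matrix (Fin M) (Fin N) ℂ) (B₀ : Matrix (Fin N) (Fin K) ℂ),
      A₀ * B₀ = A * B ∧
      ∀ (A' : Matrix (Fin M) (Fin N) ℂ) (B' : Matrix (Fin N) (Fin K) ℂ),
        A' * B' = A * B → frob A₀ * frob B₀ ≤ frob A' * frob B' := by
  set S := {p : Matrix (Fin M) (Fin N) ℂ × Matrix (Fin N) (Fin K) ℂ | p.1 * p.2 = A * B}
  have hS : IsClosed S := isClosed_eq (continuous_fst.matrix_mul continuous_snd) continuous_const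
  have hsmul : ∀ p ∈ S, ∀ t : ℝ, t ≠ 0 → (t • p.1, t⁻¹ • p.2) ∈ S := by
    rintro p (hp : p.1 * p.2 = A * B) t ht
    change t • p.1 * t⁻¹ • p.2 = A * B
    rw [Matrix.smul_mul, Matrix.mul_smul, smul_smul, mul_inv_cancel₀ ht, one_smul, hp]
  have hzero : ∀ p ∈ S, p.1 ≠ 0 ∧ p.2 ≠ 0 := by
    rintro p (hp : p.1 * p.2 = A * B)
    exact ⟨fun h => hAB (by simp [← hp, h]), fun h => hAB (by simp [← hp, h])⟩
  obtain ⟨⟨A₀, B₀⟩, hp₀, hmin⟩ := hS.exists_isMinOn_norm_mul_norm ⟨(A, B), rfl⟩ hsmul hzero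
  refine ⟨A₀, B₀, hp₀, fun A' B' h => ?_⟩
  simpa only [frob_eq_norm] using isMinOn_iff.1 hmin (A', B') h

/-- the singularity `‖A'‖‖B'‖/‖A'B'‖` attains its minimum on
`S = {(A',B') : A'B' = AB}`; since `‖A'B'‖ = ‖AB‖` is constant on `S`, this
means there is `(A₀,B₀)` with `A₀B₀ = AB` minimizing `‖A'‖·‖B'‖`. -/
theorem stmt0 (M N K : ℕ) (hM : 0 < M) (hN : 0 < N) (hK : 0 < K)
    (A : Matrix (Fin M) (Fin N) ℂ) (B : Matrix (Fin N) (Fin K) ℂ)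
    (hAB : A * B ≠ 0) :
    ∃ (A₀ : Matrix (Fin M) (Fin N) ℂ) (B₀ : Matrix (Fin N) (Fin K) ℂ),
      A₀ * B₀ = A * B ∧
      ∀ (A' : Matrix (Fin M) (Fin N) ℂ) (B' : Matrix (Fin N) (Fin K) ℂ),
        A' * B' = A * B → frob A₀ * frob B₀ ≤ frob A' * frob B' :=
  stmt0_general M N K A B hAB
end

section
/- Let A be a complex M×N matrix, B a complex N×K matrix with AB ≠ 0, and suppose (A₀, B₀) with A₀B₀ = AB minimizes ‖A'‖·‖B'‖ over all pairs (A', B') with A'B' = AB. Then A₀ᴴA₀·‖B₀‖² = B₀B₀ᴴ·‖A₀‖², i.e., A₀ᴴA₀/‖A₀‖² = B₀B₀ᴴ/‖B₀‖². -/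
/-!
For every `X`, the pairs `(A₀ (1 + tX), (1 + tX)⁻¹ B₀)` have the same product as `(A₀, B₀)`, so
`t ↦ ‖A₀ (1 + tX)‖² ‖(1 + tX)⁻¹ B₀‖²` has a local minimum at `t = 0`. Its derivative there is
`2 Re tr (C X)` with `C = ‖B₀‖² A₀ᴴA₀ - ‖A₀‖² B₀B₀ᴴ`, and taking `X = Cᴴ` and `X = i Cᴴ` gives
`tr (C Cᴴ) = 0`, i.e. `C = 0`.
-/

open Matrix

open ComplexOrder Topology

lemma frob_sq {m n : ℕ} (A : Matrix (Fin m) (Fin n) ℂ) :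
    frob A ^ 2 = ∑ i, ∑ j, ‖A i j‖ ^ 2 :=
  Real.sq_sqrt (by positivity)

lemma frob_nonneg {m n : ℕ} (A : Matrix (Fin m) (Fin n) ℂ) : 0 ≤ frob A :=
  Real.sqrt_nonneg _

lemma hasDerivAt_frob_sq {m n : ℕ} {u : ℝ → Matrix (Fin m) (Fin n) ℂ}
    {D : Matrix (Fin m) (Fin n) ℂ} {t₀ : ℝ}
    (hu : ∀ i j, HasDerivAt (fun t => u t i j) (D i j) t₀) :
    HasDerivAt (fun t => frob (u t) ^ 2) (2 * (trace ((u t₀)ᴴ * D)).re) t₀ := by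
  simp_rw [frob_sq]
  refine (HasDerivAt.fun_sum fun i _ =>
    HasDerivAt.fun_sum fun j _ => (hu i j).norm_sq).congr_deriv ?_
  simp only [trace, diag_apply, mul_apply, conjTranspose_apply, Complex.re_sum, Complex.inner,
    ← Finset.mul_sum]
  rw [Finset.sum_comm]
  simp [mul_comm]

section NormedAlgebra

variable {R : Type*} [NormedRing R] [HasSummableGeomSeries R] [NormedAlgebra ℝ R]

lemma eventually_isUnit_one_add_smul (x : R) : ∀ᶠ t : ℝ in 𝓝 0, IsUnit (1 + t • x) :=
  (Units.isOpen.preimage (by fun_prop)).mem_nhds (by simp)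

lemma hasDerivAt_ringInverse_one_add_smul (x : R) :
    HasDerivAt (fun t : ℝ => Ring.inverse (1 + t • x)) (-x) 0 := by
  have h := hasFDerivAt_ringInverse (𝕜 := ℝ) (1 : Rˣ)
  simp only [Units.val_one, inv_one] at h
  have hx : HasDerivAt (fun t : ℝ => 1 + t • x) x 0 := by
    simpa using ((hasDerivAt_id (0 : ℝ)).smul_const x).const_add (1 : R)
  simpa [Function.comp_def] using h.comp_hasDerivAt_of_eq 0 hx (by simp)

end NormedAlgebra

lemma hasDerivAt_mul_one_add_smul_apply {m n : Type*} [Fintype n] [DecidableEq n]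
    (A : Matrix m n ℂ) (X : Matrix n n ℂ) (i : m) (j : n) :
    HasDerivAt (fun t : ℝ => (A * (1 + t • X) : Matrix m n ℂ) i j) ((A * X) i j) 0 := by
  simpa [Matrix.mul_add, Matrix.mul_smul] using
    ((hasDerivAt_id (0 : ℝ)).smul_const ((A * X) i j)).const_add (A i j)

section MatrixInverse

variable {n : Type*} [Fintype n] [DecidableEq n]

-- The `ℓ∞` operator norm only serves to make matrices a complete normed algebra; the statements
-- do not depend on the choice of norm.
lemma Matrix.eventually_isUnit_one_add_smul (X : Matrix n n ℂ) :
    ∀ᶠ t : ℝ in 𝓝 0, IsUnit (1 + t • X) :=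
  let := Matrix.linftyOpNormedRing (n := n) (α := ℂ)
  let := Matrix.linftyOpNormedAlgebra (n := n) (R := ℝ) (α := ℂ)
  _root_.eventually_isUnit_one_add_smul X

lemma hasDerivAt_inv_one_add_smul_mul_apply {k : Type*}
    (X : Matrix n n ℂ) (B : Matrix n k ℂ) (i : n) (j : k) :
    HasDerivAt (fun t : ℝ => ((1 + t • X)⁻¹ * B) i j) (-(X * B) i j) 0 := by
  let := Matrix.linftyOpNormedRing (n := n) (α := ℂ)
  let := Matrix.linftyOpNormedAlgebra (n := n) (R := ℝ) (α := ℂ)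
  have hinv (l : n) : HasDerivAt (fun t : ℝ => (1 + t • X)⁻¹ i l) (-X i l) 0 := by
    simp only [nonsing_inv_eq_ringInverse]
    exact ((entryLinearMap ℝ ℂ i l).toContinuousLinearMap.hasFDerivAt.comp_hasDerivAt 0
      (hasDerivAt_ringInverse_one_add_smul X))
  simpa [mul_apply] using HasDerivAt.fun_sum fun l _ => (hinv l).mul_const (B l j)

end MatrixInverse

lemma eq_zero_of_re_trace_mul_eq_zero {n : Type*} [Fintype n] {C : Matrix n n ℂ}
    (h : ∀ X, (trace (C * X)).re = 0) : C = 0 := by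
  refine trace_mul_conjTranspose_self_eq_zero_iff.mp (Complex.ext (h _) ?_)
  simpa [Matrix.mul_smul, trace_smul] using h (Complex.I • Cᴴ)

theorem frob_sq_mul_re_trace_eq_of_minimal {m n k : ℕ}
    {A₀ : Matrix (Fin m) (Fin n) ℂ} {B₀ : Matrix (Fin n) (Fin k) ℂ}
    (hmin : ∀ (A' : Matrix (Fin m) (Fin n) ℂ) (B' : Matrix (Fin n) (Fin k) ℂ),
      A' * B' = A₀ * B₀ → frob A₀ * frob B₀ ≤ frob A' * frob B')
    (X : Matrix (Fin n) (Fin n) ℂ) :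
    frob B₀ ^ 2 * (trace (A₀ᴴ * A₀ * X)).re = frob A₀ ^ 2 * (trace (B₀ * B₀ᴴ * X)).re := by
  have hA := hasDerivAt_frob_sq (hasDerivAt_mul_one_add_smul_apply A₀ X)
  have hB := hasDerivAt_frob_sq (D := -(X * B₀)) (hasDerivAt_inv_one_add_smul_mul_apply X B₀)
  have hlocal : IsLocalMin
      (fun t : ℝ => frob (A₀ * (1 + t • X)) ^ 2 * frob ((1 + t • X)⁻¹ * B₀) ^ 2) 0 := by
    filter_upwards [Matrix.eventually_isUnit_one_add_smul X] with t ht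
    have hprod : A₀ * (1 + t • X) * ((1 + t • X)⁻¹ * B₀) = A₀ * B₀ := by
      rw [Matrix.mul_assoc, mul_nonsing_inv_cancel_left _ _ ((isUnit_iff_isUnit_det _).mp ht)]
    simpa [← mul_pow] using
      pow_le_pow_left₀ (mul_nonneg (frob_nonneg _) (frob_nonneg _)) (hmin _ _ hprod) 2
  have hcrit := hlocal.hasDerivAt_eq_zero (hA.mul hB)
  simp only [zero_smul, add_zero, Matrix.mul_one, inv_one, Matrix.one_mul, Matrix.mul_neg,
    trace_neg, Complex.neg_re, ← Matrix.mul_assoc, trace_mul_cycle B₀ᴴ X B₀] at hcrit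
  linear_combination hcrit / 2

theorem stmt1_general (M N K : ℕ)
    (A A₀ : Matrix (Fin M) (Fin N) ℂ) (B B₀ : Matrix (Fin N) (Fin K) ℂ)
    (h0 : A₀ * B₀ = A * B)
    (hmin : ∀ (A' : Matrix (Fin M) (Fin N) ℂ) (B' : Matrix (Fin N) (Fin K) ℂ),
      A' * B' = A * B → frob A₀ * frob B₀ ≤ frob A' * frob B') :
    (frob B₀ ^ 2) • (A₀ᴴ * A₀) = (frob A₀ ^ 2) • (B₀ * B₀ᴴ) := by
  rw [← h0] at hmin
  refine sub_eq_zero.mp (eq_zero_of_re_trace_mul_eq_zero fun X => ?_)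
  simp only [Matrix.sub_mul, Matrix.smul_mul, trace_sub, trace_smul, Complex.sub_re,
    Complex.real_smul, Complex.re_ofReal_mul]
  rw [frob_sq_mul_re_trace_eq_of_minimal hmin X, sub_self]

/-- a minimal singularity form `(A₀,B₀)` of `AB ≠ 0` satisfies the
stationarity condition `A₀ᴴA₀·‖B₀‖² = B₀B₀ᴴ·‖A₀‖²`. -/
theorem stmt1 (M N K : ℕ)
    (A A₀ : Matrix (Fin M) (Fin N) ℂ) (B B₀ : Matrix (Fin N) (Fin K) ℂ)
    (hAB : A * B ≠ 0) (h0 : A₀ * B₀ = A * B)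
    (hmin : ∀ (A' : Matrix (Fin M) (Fin N) ℂ) (B' : Matrix (Fin N) (Fin K) ℂ),
      A' * B' = A * B → frob A₀ * frob B₀ ≤ frob A' * frob B') :
    (frob B₀ ^ 2) • (A₀ᴴ * A₀) = (frob A₀ ^ 2) • (B₀ * B₀ᴴ) :=
  stmt1_general M N K A A₀ B B₀ h0 hmin
end
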